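/- arXiv:1908.00782 — 7 statements merged into one kernel-verified Lean document; each statement's English description precedes it below -/
import Mathlib

section
/- Let $n\ge 2$, integers $a_1,\dots,a_n\ge 2$, sequence $\mu_1=1$, $\mu_2=a_1$, $\mu_i=a_{i-1}\mu_{i-1}-\mu_{i-2}$, and integers $r_1,\dots,r_n$ with $|r_i|\le a_i-2$ for all $i$. If $r_n\neq 0$, then $|r_n\mu_n| - |r_{n-1}\mu_{n-1}| > 0$. -/
/-!
The sequence `μ` is positive and strictly increasing, since
`μ (i+1) - μ i = (a i - 2) μ i + (μ i - μ (i-1))`, so the differences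
never decrease from `μ 2 - μ 1 = a 1 - 1 ≥ 1`. Hence
`|r (n-1)| μ (n-1) ≤ (a (n-1) - 2) μ (n-1) = μ n - (2 μ (n-1) - μ (n-2)) < μ n ≤ |r n| μ n`.
-/

lemma lt_mul_sub_of_lt {c x y : ℤ} (hc : 2 ≤ c) (hx : 1 ≤ x) (hxy : x < y) : y < c * y - x := by
  nlinarith

section ThreeTermRecurrence

variable {n : ℕ} {a μ : ℕ → ℤ}

lemma one_le_and_lt_succ_of_recurrence (ha : ∀ i, 1 ≤ i → i < n → 2 ≤ a i) (hμ1 : μ 1 = 1)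
    (hμ2 : μ 2 = a 1)
    (hμ : ∀ i, 3 ≤ i → i ≤ n → μ i = a (i - 1) * μ (i - 1) - μ (i - 2)) :
    ∀ i, 1 ≤ i → i < n → 1 ≤ μ i ∧ μ i < μ (i + 1) := by
  intro i hi
  induction i, hi using Nat.le_induction with
  | base =>
    intro hn
    have := ha 1 le_rfl hn
    rw [hμ1, hμ2]
    omega
  | succ i hi ih =>
    intro hin
    obtain ⟨hpos, hlt⟩ := ih (by omega)
    have hrec : μ (i + 2) = a (i + 1) * μ (i + 1) - μ i := hμ (i + 2) (by omega) hin
    refine ⟨by omega, ?_⟩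
    rw [hrec]
    exact lt_mul_sub_of_lt (ha (i + 1) (by omega) hin) hpos hlt

lemma sub_two_mul_lt_of_recurrence (hn : 2 ≤ n) (ha : ∀ i, 1 ≤ i → i < n → 2 ≤ a i) (hμ1 : μ 1 = 1)
    (hμ2 : μ 2 = a 1) (hμ : ∀ i, 3 ≤ i → i ≤ n → μ i = a (i - 1) * μ (i - 1) - μ (i - 2)) :
    (a (n - 1) - 2) * μ (n - 1) < μ n := by
  obtain ⟨m, rfl⟩ : ∃ m, n = m + 2 := ⟨n - 2, by omega⟩
  rcases m with _ | m
  · simp only [hμ1, hμ2, zero_add, Nat.add_one_sub_one]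
    omega
  · have hrec : μ (m + 3) = a (m + 2) * μ (m + 2) - μ (m + 1) := hμ (m + 3) (by omega) le_rfl
    obtain ⟨hpos, hlt⟩ :=
      one_le_and_lt_succ_of_recurrence ha hμ1 hμ2 hμ (m + 1) (by omega) (by omega)
    simp only [Nat.add_one_sub_one, hrec]
    linarith

end ThreeTermRecurrence

theorem stmt_5 (n : ℕ) (hn : 2 ≤ n) (a μ r : ℕ → ℤ)
    (ha : ∀ i, 1 ≤ i → i ≤ n → 2 ≤ a i)
    (hμ1 : μ 1 = 1) (hμ2 : μ 2 = a 1)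
    (hμ : ∀ i, 3 ≤ i → i ≤ n → μ i = a (i - 1) * μ (i - 1) - μ (i - 2))
    (hr : ∀ i, 1 ≤ i → i ≤ n → |r i| ≤ a i - 2)
    (hrn : r n ≠ 0) :
    0 < |r n * μ n| - |r (n - 1) * μ (n - 1)| := by
  have ha' : ∀ i, 1 ≤ i → i < n → 2 ≤ a i := fun i h1 h2 => ha i h1 h2.le
  obtain ⟨hpos, hlt⟩ :=
    one_le_and_lt_succ_of_recurrence ha' hμ1 hμ2 hμ (n - 1) (by omega) (by omega)
  rw [Nat.sub_add_cancel (by omega)] at hlt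
  have hprev : |r (n - 1)| ≤ a (n - 1) - 2 := hr (n - 1) (by omega) (by omega)
  have hlast : 1 ≤ |r n| := Int.one_le_abs hrn
  rw [sub_pos]
  calc |r (n - 1) * μ (n - 1)| = |r (n - 1)| * μ (n - 1) := by
        rw [abs_mul, abs_of_pos (a := μ (n - 1)) (by omega)]
    _ ≤ (a (n - 1) - 2) * μ (n - 1) := by gcongr
    _ < μ n := sub_two_mul_lt_of_recurrence hn ha' hμ1 hμ2 hμ
    _ ≤ |r n| * μ n := le_mul_of_one_le_left (by omega) hlast
    _ = |r n * μ n| := by rw [abs_mul, abs_of_pos (a := μ n) (by omega)]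
end

section
/- Let $n\ge 2$, integers $a_1,\dots,a_n\ge 2$, sequence $\mu_1=1$, $\mu_2=a_1$, $\mu_i=a_{i-1}\mu_{i-1}-\mu_{i-2}$, and integers $r_1,\dots,r_n$ with $|r_i|\le a_i-2$. If $r_n\neq 0$, then $|r_n\mu_n| > \left|\sum_{i=1}^{n-1} r_i\mu_i\right|$. -/
/-! Telescoping the recurrence gives `μ (k + 2) = μ (k + 1) + 1 + ∑_{i ≤ k + 1} (a i - 2) μ i`.
Hence `μ` is positive, and `∑_{i < n} |r i| μ i ≤ ∑_{i < n} (a i - 2) μ i < μ n ≤ |r n| μ n`. -/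

theorem mu_add_two_eq_mu_add_one_add_sum (n : ℕ) (a μ : ℕ → ℤ) (hμ1 : μ 1 = 1)
    (hμ2 : μ 2 = a 1) (hμ : ∀ i, 3 ≤ i → i ≤ n → μ i = a (i - 1) * μ (i - 1) - μ (i - 2)) :
    ∀ k, k + 2 ≤ n →
      μ (k + 2) = μ (k + 1) + 1 + ∑ i ∈ Finset.Icc 1 (k + 1), (a i - 2) * μ i := by
  intro k
  induction k with
  | zero =>
    intro _
    simp [hμ1, hμ2]
  | succ k ih =>
    intro hk
    have hrec : μ (k + 3) = a (k + 2) * μ (k + 2) - μ (k + 1) := hμ (k + 3) (by omega) hk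
    rw [Finset.sum_Icc_succ_top (by omega)]
    show μ (k + 3) = μ (k + 2) + 1 +
      (∑ i ∈ Finset.Icc 1 (k + 1), (a i - 2) * μ i + (a (k + 2) - 2) * μ (k + 2))
    linear_combination hrec + ih (by omega)

theorem one_le_mu (n : ℕ) (a μ : ℕ → ℤ) (ha : ∀ i, 1 ≤ i → i ≤ n → 2 ≤ a i)
    (hμ1 : μ 1 = 1) (hμ2 : μ 2 = a 1)
    (hμ : ∀ i, 3 ≤ i → i ≤ n → μ i = a (i - 1) * μ (i - 1) - μ (i - 2)) :
    ∀ i, 1 ≤ i → i ≤ n → 1 ≤ μ i := by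
  suffices h : ∀ k, k + 1 ≤ n → ∀ i ∈ Finset.Icc 1 (k + 1), 1 ≤ μ i by
    intro i hi hin
    exact h (i - 1) (by omega) i (Finset.mem_Icc.mpr ⟨hi, by omega⟩)
  intro k
  induction k with
  | zero =>
    intro _ i hi
    obtain rfl : i = 1 := by simp at hi; omega
    exact hμ1.ge
  | succ k ih =>
    intro hk i hi
    obtain ⟨hi1, hi2⟩ := Finset.mem_Icc.mp hi
    rcases Nat.lt_or_ge i (k + 2) with hlt | hge
    · exact ih (by omega) i (Finset.mem_Icc.mpr ⟨hi1, by omega⟩)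
    obtain rfl : i = k + 2 := by omega
    have hsum : 0 ≤ ∑ j ∈ Finset.Icc 1 (k + 1), (a j - 2) * μ j := by
      refine Finset.sum_nonneg fun j hj => mul_nonneg ?_ ?_
      · have := ha j (Finset.mem_Icc.mp hj).1 (by simp at hj; omega)
        linarith
      · linarith [ih (by omega) j hj]
    have hprev := ih (by omega) (k + 1) (Finset.mem_Icc.mpr ⟨by omega, le_rfl⟩)
    rw [mu_add_two_eq_mu_add_one_add_sum n a μ hμ1 hμ2 hμ k hk]
    linarith

theorem stmt_6 (n : ℕ) (hn : 2 ≤ n) (a μ r : ℕ → ℤ)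
    (ha : ∀ i, 1 ≤ i → i ≤ n → 2 ≤ a i)
    (hμ1 : μ 1 = 1) (hμ2 : μ 2 = a 1)
    (hμ : ∀ i, 3 ≤ i → i ≤ n → μ i = a (i - 1) * μ (i - 1) - μ (i - 2))
    (hr : ∀ i, 1 ≤ i → i ≤ n → |r i| ≤ a i - 2)
    (hrn : r n ≠ 0) :
    |∑ i ∈ Finset.Icc 1 (n - 1), r i * μ i| < |r n * μ n| := by
  have hpos := one_le_mu n a μ ha hμ1 hμ2 hμ
  obtain ⟨k, rfl⟩ : ∃ k, n = k + 2 := ⟨n - 2, by omega⟩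
  have htele := mu_add_two_eq_mu_add_one_add_sum _ a μ hμ1 hμ2 hμ k le_rfl
  have hμn := hpos (k + 2) (by omega) le_rfl
  have hμn1 := hpos (k + 1) (by omega) (by omega)
  have hrn' : 1 ≤ |r (k + 2)| := Int.one_le_abs hrn
  calc |∑ i ∈ Finset.Icc 1 (k + 1), r i * μ i|
      ≤ ∑ i ∈ Finset.Icc 1 (k + 1), |r i * μ i| := Finset.abs_sum_le_sum_abs _ _
    _ ≤ ∑ i ∈ Finset.Icc 1 (k + 1), (a i - 2) * μ i := by
      refine Finset.sum_le_sum fun i hi => ?_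
      obtain ⟨hi1, hi2⟩ := Finset.mem_Icc.mp hi
      have hμi : 0 < μ i := hpos i hi1 (by omega)
      rw [abs_mul, abs_of_pos hμi]
      exact mul_le_mul_of_nonneg_right (hr i hi1 (by omega)) hμi.le
    _ < μ (k + 2) := by linarith
    _ ≤ |r (k + 2)| * μ (k + 2) := le_mul_of_one_le_left (by linarith) hrn'
    _ = |r (k + 2) * μ (k + 2)| := by rw [abs_mul, abs_of_pos (a := μ (k + 2)) (by linarith)]
end

section
/- Let $n\ge 1$, integers $a_1,\dots,a_n\ge 2$, sequence $\mu_1=1$, $\mu_2=a_1$, $\mu_i=a_{i-1}\mu_{i-1}-\mu_{i-2}$, and integers $r_1,\dots,r_n$ with $|r_i|\le a_i-2$. If $\sum_{i=1}^{n} r_i\mu_i = 0$, then $r_i=0$ for all $i$. -/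
/-!
The weights `μ₁ < μ₂ < ⋯` telescope: `∑_{i ≤ k} (aᵢ - 2) μᵢ = μ_{k+1} - μ_k - 1`, so every weight
strictly exceeds the largest possible contribution `∑_{i < k} |rᵢ| μᵢ` of the smaller ones.
Reading `∑ rᵢ μᵢ = 0` from the top index down, each top coefficient must therefore vanish,
exactly as for digits in a positional number system.
-/

open Finset

theorem eq_zero_of_sum_mul_eq_zero_of_lt {n : ℕ} {r w : ℕ → ℤ}
    (hw_pos : ∀ i, 1 ≤ i → i ≤ n → 0 < w i)
    (hw : ∀ k < n, ∑ i ∈ Icc 1 k, |r i| * w i < w (k + 1))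
    (hsum : ∑ i ∈ Icc 1 n, r i * w i = 0) :
    ∀ i, 1 ≤ i → i ≤ n → r i = 0 := by
  induction n with
  | zero => intro i hi₁ hi₀; omega
  | succ n ih =>
    rw [sum_Icc_succ_top (by omega)] at hsum
    have hbound : |∑ i ∈ Icc 1 n, r i * w i| ≤ ∑ i ∈ Icc 1 n, |r i| * w i := by
      refine (abs_sum_le_sum_abs _ _).trans (sum_le_sum fun i hi => ?_)
      rw [mem_Icc] at hi
      rw [abs_mul, abs_of_pos (hw_pos i hi.1 (by omega))]
    have hw_top := hw_pos (n + 1) (by omega) le_rfl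
    have htop : |r (n + 1)| * w (n + 1) < 1 * w (n + 1) :=
      calc |r (n + 1)| * w (n + 1) = |∑ i ∈ Icc 1 n, r i * w i| := by
            rw [eq_neg_of_add_eq_zero_left hsum, abs_neg, abs_mul, abs_of_pos hw_top]
        _ < 1 * w (n + 1) := by rw [one_mul]; exact hbound.trans_lt (hw n (by omega))
    have hr_top : r (n + 1) = 0 :=
      Int.abs_lt_one_iff.mp (lt_of_mul_lt_mul_right htop hw_top.le)
    rw [hr_top, zero_mul, add_zero] at hsum
    intro i hi₁ hi
    rcases hi.lt_or_eq with hi | rfl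
    · exact ih (fun i h₁ h₂ => hw_pos i h₁ (by omega)) (fun k hk => hw k (by omega)) hsum i hi₁
        (by omega)
    · exact hr_top

section Recurrence

variable {n : ℕ} {a μ : ℕ → ℤ}

theorem pos_and_lt_succ_of_rec (ha : ∀ i, 1 ≤ i → i ≤ n → 2 ≤ a i)
    (hμ1 : μ 1 = 1) (hμ2 : μ 2 = a 1)
    (hμ : ∀ i, 3 ≤ i → i ≤ n → μ i = a (i - 1) * μ (i - 1) - μ (i - 2)) :
    ∀ k, 1 ≤ k → k + 1 ≤ n → 0 < μ k ∧ μ k < μ (k + 1) := by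
  intro k hk
  induction k, hk using Nat.le_induction with
  | base =>
    intro hn
    have := ha 1 le_rfl (by omega)
    constructor <;> simp only [hμ1, hμ2] <;> omega
  | succ k hk ih =>
    intro hkn
    obtain ⟨hμk, hμk_lt⟩ := ih (by omega)
    have hrec : μ (k + 2) = a (k + 1) * μ (k + 1) - μ k := hμ (k + 2) (by omega) hkn
    have hak := ha (k + 1) (by omega) (by omega)
    refine ⟨hμk.trans hμk_lt, ?_⟩
    rw [hrec]
    nlinarith

theorem pos_of_rec (ha : ∀ i, 1 ≤ i → i ≤ n → 2 ≤ a i)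
    (hμ1 : μ 1 = 1) (hμ2 : μ 2 = a 1)
    (hμ : ∀ i, 3 ≤ i → i ≤ n → μ i = a (i - 1) * μ (i - 1) - μ (i - 2)) :
    ∀ k, 1 ≤ k → k ≤ n → 0 < μ k := by
  rintro (_ | _ | k) hk hkn
  · omega
  · simp [hμ1]
  · obtain ⟨hpos, hlt⟩ := pos_and_lt_succ_of_rec ha hμ1 hμ2 hμ (k + 1) (by omega) hkn
    exact hpos.trans hlt

theorem sum_sub_two_mul_eq_of_rec (hμ1 : μ 1 = 1) (hμ2 : μ 2 = a 1)
    (hμ : ∀ i, 3 ≤ i → i ≤ n → μ i = a (i - 1) * μ (i - 1) - μ (i - 2)) :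
    ∀ k, 1 ≤ k → k + 1 ≤ n → ∑ i ∈ Icc 1 k, (a i - 2) * μ i = μ (k + 1) - μ k - 1 := by
  intro k hk
  induction k, hk using Nat.le_induction with
  | base =>
    intro _
    rw [Icc_self, sum_singleton, hμ1, hμ2]
    ring
  | succ k hk ih =>
    intro hkn
    have hrec : μ (k + 2) = a (k + 1) * μ (k + 1) - μ k := hμ (k + 2) (by omega) hkn
    rw [sum_Icc_succ_top (by omega), ih (by omega), hrec]
    ring

end Recurrence

theorem stmt_7_general (n : ℕ) (a μ r : ℕ → ℤ)
    (ha : ∀ i, 1 ≤ i → i ≤ n → 2 ≤ a i)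
    (hμ1 : μ 1 = 1) (hμ2 : μ 2 = a 1)
    (hμ : ∀ i, 3 ≤ i → i ≤ n → μ i = a (i - 1) * μ (i - 1) - μ (i - 2))
    (hr : ∀ i, 1 ≤ i → i ≤ n → |r i| ≤ a i - 2)
    (hsum : ∑ i ∈ Finset.Icc 1 n, r i * μ i = 0) :
    ∀ i, 1 ≤ i → i ≤ n → r i = 0 := by
  have hpos := pos_of_rec ha hμ1 hμ2 hμ
  refine eq_zero_of_sum_mul_eq_zero_of_lt hpos (fun k hk => ?_) hsum
  have hle : ∑ i ∈ Icc 1 k, |r i| * μ i ≤ ∑ i ∈ Icc 1 k, (a i - 2) * μ i :=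
    sum_le_sum fun i hi => by
      rw [mem_Icc] at hi
      exact mul_le_mul_of_nonneg_right (hr i hi.1 (by omega)) (hpos i hi.1 (by omega)).le
  refine hle.trans_lt ?_
  rcases Nat.eq_zero_or_pos k with rfl | hk₀
  · simpa using hpos 1 le_rfl (by omega)
  · rw [sum_sub_two_mul_eq_of_rec hμ1 hμ2 hμ k hk₀ hk]
    linarith [hpos k hk₀ hk.le]

theorem stmt_7 (n : ℕ) (hn : 1 ≤ n) (a μ r : ℕ → ℤ)
    (ha : ∀ i, 1 ≤ i → i ≤ n → 2 ≤ a i)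
    (hμ1 : μ 1 = 1) (hμ2 : μ 2 = a 1)
    (hμ : ∀ i, 3 ≤ i → i ≤ n → μ i = a (i - 1) * μ (i - 1) - μ (i - 2))
    (hr : ∀ i, 1 ≤ i → i ≤ n → |r i| ≤ a i - 2)
    (hsum : ∑ i ∈ Finset.Icc 1 n, r i * μ i = 0) :
    ∀ i, 1 ≤ i → i ≤ n → r i = 0 :=
  stmt_7_general n a μ r ha hμ1 hμ2 hμ hr hsum
end

section
/- Let $n\ge 1$, integers $a_1,\dots,a_n\ge 2$, and $\Delta$ defined by $\Delta[-1]=0$, $\Delta[0]=1$, $\Delta[i]=-a_i\Delta[i-1]-\Delta[i-2]$. Let integers $r_1,\dots,r_n$ satisfy $|r_i|\le a_i-2$. Then $|\Delta[n]| > \left|\sum_{i=1}^n r_i\Delta[i-1]\right|$. -/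
/-!
Up to the sign, `Δ` is a continuant: `E k = (-1)^(k+1) D k` satisfies `E 0 = 0`, `E 1 = 1` and
`E (i+1) = a i * E i - E (i-1)`. The gap `E (i+1) - E i` therefore grows by
`(a i - 2) * E i` at each step, which is exactly the room needed to absorb the new summand
`r i * D i`. By induction the partial sums stay strictly below the gap, hence below `E (n+1)`.
-/

section Continuant

variable {R : Type*} [CommRing R] [LinearOrder R] [IsStrictOrderedRing R]
  {n : ℕ} {a E x : ℕ → R}

theorem nonneg_and_abs_sum_add_one_le_of_continuant (h0 : E 0 = 0) (h1 : E 1 = 1)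
    (hE : ∀ i, 1 ≤ i → i ≤ n → E (i + 1) = a i * E i - E (i - 1))
    (hx : ∀ i, 1 ≤ i → i ≤ n → |x i| ≤ (a i - 2) * |E i|) :
    ∀ m ≤ n, 0 ≤ E m ∧ |∑ i ∈ Finset.Icc 1 m, x i| + 1 ≤ E (m + 1) - E m := by
  intro m
  induction m with
  | zero => simp [h0, h1]
  | succ j ih =>
    intro hj
    obtain ⟨hEj, hgap⟩ := ih (by omega)
    have hEj1 : 0 ≤ E (j + 1) := by linarith [abs_nonneg (∑ i ∈ Finset.Icc 1 j, x i)]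
    have hrec : E (j + 2) = a (j + 1) * E (j + 1) - E j := hE (j + 1) (by omega) hj
    have hxj : |x (j + 1)| ≤ (a (j + 1) - 2) * E (j + 1) := by
      simpa only [abs_of_nonneg hEj1] using hx (j + 1) (by omega) hj
    refine ⟨hEj1, ?_⟩
    calc |∑ i ∈ Finset.Icc 1 (j + 1), x i| + 1
        ≤ |∑ i ∈ Finset.Icc 1 j, x i| + 1 + |x (j + 1)| := by
          rw [Finset.sum_Icc_succ_top (by omega)]
          linarith [abs_add_le (∑ i ∈ Finset.Icc 1 j, x i) (x (j + 1))]
      _ ≤ (E (j + 1) - E j) + (a (j + 1) - 2) * E (j + 1) := by linarith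
      _ = E (j + 2) - E (j + 1) := by rw [hrec]; ring

theorem abs_sum_lt_of_continuant (h0 : E 0 = 0) (h1 : E 1 = 1)
    (hE : ∀ i, 1 ≤ i → i ≤ n → E (i + 1) = a i * E i - E (i - 1))
    (hx : ∀ i, 1 ≤ i → i ≤ n → |x i| ≤ (a i - 2) * |E i|) :
    |∑ i ∈ Finset.Icc 1 n, x i| < E (n + 1) := by
  obtain ⟨hEn, hgap⟩ := nonneg_and_abs_sum_add_one_le_of_continuant h0 h1 hE hx n le_rfl
  linarith

end Continuant

theorem stmt_8_general (n : ℕ) (a D r : ℕ → ℤ)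
    (hD0 : D 0 = 0) (hD1 : D 1 = 1)
    (hD : ∀ i, 1 ≤ i → i ≤ n → D (i + 1) = -a i * D i - D (i - 1))
    (hr : ∀ i, 1 ≤ i → i ≤ n → |r i| ≤ a i - 2) :
    |∑ i ∈ Finset.Icc 1 n, r i * D i| < |D (n + 1)| := by
  set E : ℕ → ℤ := fun k => (-1) ^ (k + 1) * D k
  have habsE (k : ℕ) : |E k| = |D k| := by simp [E, abs_mul]
  have hE : ∀ i, 1 ≤ i → i ≤ n → E (i + 1) = a i * E i - E (i - 1) := by
    rintro (_ | j) hj hjn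
    · omega
    · simp only [E, hD (j + 1) hj hjn, Nat.add_sub_cancel, pow_succ]
      ring
  have hx : ∀ i, 1 ≤ i → i ≤ n → |r i * D i| ≤ (a i - 2) * |E i| := fun i hi hin => by
    rw [abs_mul, habsE]
    exact mul_le_mul_of_nonneg_right (hr i hi hin) (abs_nonneg _)
  calc |∑ i ∈ Finset.Icc 1 n, r i * D i|
      < E (n + 1) := abs_sum_lt_of_continuant (by simp [E, hD0]) (by simp [E, hD1]) hE hx
    _ ≤ |E (n + 1)| := le_abs_self _
    _ = |D (n + 1)| := habsE _

/-- `D k` denotes `Δ[k-1]`, so `Δ[n] = D (n+1)` and `Δ[i-1] = D i`. -/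
theorem stmt_8 (n : ℕ) (hn : 1 ≤ n) (a D r : ℕ → ℤ)
    (ha : ∀ i, 1 ≤ i → i ≤ n → 2 ≤ a i)
    (hD0 : D 0 = 0) (hD1 : D 1 = 1)
    (hD : ∀ i, 1 ≤ i → i ≤ n → D (i + 1) = -a i * D i - D (i - 1))
    (hr : ∀ i, 1 ≤ i → i ≤ n → |r i| ≤ a i - 2) :
    |∑ i ∈ Finset.Icc 1 n, r i * D i| < |D (n + 1)| :=
  stmt_8_general n a D r hD0 hD1 hD hr
end

section
/- Let $n\ge 1$, integers $a_1,\dots,a_n\ge 2$, the sequence $\mu_1=1$, $\mu_2=a_1$, $\mu_i=a_{i-1}\mu_{i-1}-\mu_{i-2}$, and integers $r_1,\dots,r_n$ with $|r_i|\le a_i-2$. Let $\Delta[n]$ be as in the recursion $\Delta[-1]=0$, $\Delta[0]=1$, $\Delta[i]=-a_i\Delta[i-1]-\Delta[i-2]$. Then $\sum_{i=1}^n r_i\mu_i \equiv 0 \pmod{\Delta[n]}$ if and only if $\sum_{i=1}^n r_i\mu_i = 0$. -/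
/-!
Up to sign, `Δ[i-1]` is `μ_i`, the numerator of the negative continued fraction
`[a_1, …, a_{i-1}]` (with `μ_0 = 0`). Since `a_i ≥ 2` these are nonnegative and strictly increasing,
and the sum `∑ (a_i - 2) μ_i` telescopes to `μ_{n+1} - μ_n - 1`. Hence
`|∑ r_i μ_i| < μ_{n+1} = |Δ[n]|`, and the only multiple of `Δ[n]` in that range is `0`.
-/

/-- `negContinuant a i` is `μ_i` extended by `μ_0 = 0`, so that `μ_{n+1}` is defined
even though the recursion for `μ` only runs up to `n`. -/
def negContinuant (a : ℕ → ℤ) : ℕ → ℤ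
  | 0 => 0
  | 1 => 1
  | i + 2 => a (i + 1) * negContinuant a (i + 1) - negContinuant a i

namespace negContinuant

variable (a : ℕ → ℤ)

@[simp] lemma zero : negContinuant a 0 = 0 := rfl

@[simp] lemma one : negContinuant a 1 = 1 := rfl

lemma add_two (i : ℕ) :
    negContinuant a (i + 2) = a (i + 1) * negContinuant a (i + 1) - negContinuant a i := rfl

lemma nonneg_and_lt_succ {n : ℕ} (ha : ∀ i, 1 ≤ i → i ≤ n → 2 ≤ a i) {i : ℕ} (hi : i ≤ n) :
    0 ≤ negContinuant a i ∧ negContinuant a i < negContinuant a (i + 1) := by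
  induction i with
  | zero => simp
  | succ k ih =>
    obtain ⟨hk_nonneg, hk_lt⟩ := ih (by omega)
    have hak : 0 ≤ a (k + 1) - 2 := by linarith [ha (k + 1) (by omega) hi]
    refine ⟨by linarith, ?_⟩
    rw [add_two]
    nlinarith [mul_nonneg hak (by linarith : 0 ≤ negContinuant a (k + 1))]

lemma succ_pos {n : ℕ} (ha : ∀ i, 1 ≤ i → i ≤ n → 2 ≤ a i) : 0 < negContinuant a (n + 1) :=
  (nonneg_and_lt_succ a ha le_rfl).1.trans_lt (nonneg_and_lt_succ a ha le_rfl).2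

lemma sum_sub_two_mul (n : ℕ) :
    ∑ i ∈ Finset.Icc 1 n, (a i - 2) * negContinuant a i =
      negContinuant a (n + 1) - negContinuant a n - 1 := by
  induction n with
  | zero => simp
  | succ k ih =>
    rw [Finset.sum_Icc_succ_top (by omega), ih, add_two]
    ring

lemma abs_sum_mul_lt {n : ℕ} (r : ℕ → ℤ) (ha : ∀ i, 1 ≤ i → i ≤ n → 2 ≤ a i)
    (hr : ∀ i, 1 ≤ i → i ≤ n → |r i| ≤ a i - 2) :
    |∑ i ∈ Finset.Icc 1 n, r i * negContinuant a i| < negContinuant a (n + 1) := by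
  calc |∑ i ∈ Finset.Icc 1 n, r i * negContinuant a i|
      ≤ ∑ i ∈ Finset.Icc 1 n, |r i * negContinuant a i| := Finset.abs_sum_le_sum_abs _ _
    _ ≤ ∑ i ∈ Finset.Icc 1 n, (a i - 2) * negContinuant a i := by
        refine Finset.sum_le_sum fun i hi => ?_
        obtain ⟨hi1, hin⟩ := Finset.mem_Icc.mp hi
        have h0 := (nonneg_and_lt_succ a ha hin).1
        rw [abs_mul, abs_of_nonneg h0]
        exact mul_le_mul_of_nonneg_right (hr i hi1 hin) h0
    _ = negContinuant a (n + 1) - negContinuant a n - 1 := sum_sub_two_mul a n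
    _ < negContinuant a (n + 1) := by linarith [(nonneg_and_lt_succ a ha le_rfl).1]

lemma eq_of_rec {n : ℕ} {μ : ℕ → ℤ} (hμ1 : μ 1 = 1) (hμ2 : μ 2 = a 1)
    (hμ : ∀ i, 3 ≤ i → i ≤ n → μ i = a (i - 1) * μ (i - 1) - μ (i - 2)) :
    ∀ i, 1 ≤ i → i ≤ n → μ i = negContinuant a i := by
  intro i
  induction i using Nat.strong_induction_on with
  | _ i ih =>
    intro hi1 hin
    match i, hi1 with
    | 1, _ => simpa using hμ1
    | 2, _ => simpa [add_two] using hμ2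
    | k + 3, _ =>
      rw [hμ (k + 3) (by omega) hin, add_two]
      rw [show k + 3 - 1 = k + 2 from rfl, show k + 3 - 2 = k + 1 from rfl,
        ih (k + 2) (by omega) (by omega) (by omega), ih (k + 1) (by omega) (by omega) (by omega)]

/-- The signs alternate because `Δ` satisfies the recursion with `-a_i` in place of `a_i`. -/
lemma eq_neg_one_pow_mul_of_rec {n : ℕ} {D : ℕ → ℤ} (hD0 : D 0 = 0) (hD1 : D 1 = 1)
    (hD : ∀ i, 1 ≤ i → i ≤ n → D (i + 1) = -a i * D i - D (i - 1)) {i : ℕ} (hi : i ≤ n) :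
    D i = (-1) ^ (i + 1) * negContinuant a i ∧
      D (i + 1) = (-1) ^ i * negContinuant a (i + 1) := by
  induction i with
  | zero => simp [hD0, hD1]
  | succ k ih =>
    obtain ⟨hk, hk_succ⟩ := ih (by omega)
    refine ⟨by rw [hk_succ]; ring, ?_⟩
    rw [hD (k + 1) (by omega) hi, show k + 1 - 1 = k from rfl, hk, hk_succ, add_two, pow_succ]
    ring

end negContinuant

theorem stmt_9_general (n : ℕ) (a μ D r : ℕ → ℤ)
    (ha : ∀ i, 1 ≤ i → i ≤ n → 2 ≤ a i)
    (hμ1 : μ 1 = 1) (hμ2 : μ 2 = a 1)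
    (hμ : ∀ i, 3 ≤ i → i ≤ n → μ i = a (i - 1) * μ (i - 1) - μ (i - 2))
    (hD0 : D 0 = 0) (hD1 : D 1 = 1)
    (hD : ∀ i, 1 ≤ i → i ≤ n → D (i + 1) = -a i * D i - D (i - 1))
    (hr : ∀ i, 1 ≤ i → i ≤ n → |r i| ≤ a i - 2) :
    D (n + 1) ∣ (∑ i ∈ Finset.Icc 1 n, r i * μ i) ↔
      ∑ i ∈ Finset.Icc 1 n, r i * μ i = 0 := by
  refine ⟨fun hdvd => ?_, fun h => h ▸ dvd_zero _⟩
  have hsum : ∑ i ∈ Finset.Icc 1 n, r i * μ i =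
      ∑ i ∈ Finset.Icc 1 n, r i * negContinuant a i :=
    Finset.sum_congr rfl fun i hi => by
      rw [negContinuant.eq_of_rec a hμ1 hμ2 hμ i (Finset.mem_Icc.mp hi).1
        (Finset.mem_Icc.mp hi).2]
  have habsD : |D (n + 1)| = negContinuant a (n + 1) := by
    simp [(negContinuant.eq_neg_one_pow_mul_of_rec a hD0 hD1 hD le_rfl).2, abs_mul,
      abs_of_pos (negContinuant.succ_pos a ha)]
  rw [hsum] at hdvd ⊢
  exact Int.eq_zero_of_abs_lt_dvd ((abs_dvd _ _).mpr hdvd)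
    (habsD ▸ negContinuant.abs_sum_mul_lt a r ha hr)

/-- `D k` denotes `Δ[k-1]`, so `Δ[n] = D (n+1)`. -/
theorem stmt_9 (n : ℕ) (hn : 1 ≤ n) (a μ D r : ℕ → ℤ)
    (ha : ∀ i, 1 ≤ i → i ≤ n → 2 ≤ a i)
    (hμ1 : μ 1 = 1) (hμ2 : μ 2 = a 1)
    (hμ : ∀ i, 3 ≤ i → i ≤ n → μ i = a (i - 1) * μ (i - 1) - μ (i - 2))
    (hD0 : D 0 = 0) (hD1 : D 1 = 1)
    (hD : ∀ i, 1 ≤ i → i ≤ n → D (i + 1) = -a i * D i - D (i - 1))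
    (hr : ∀ i, 1 ≤ i → i ≤ n → |r i| ≤ a i - 2) :
    D (n + 1) ∣ (∑ i ∈ Finset.Icc 1 n, r i * μ i) ↔
      ∑ i ∈ Finset.Icc 1 n, r i * μ i = 0 :=
  stmt_9_general n a μ D r ha hμ1 hμ2 hμ hD0 hD1 hD hr
end

section
/- Let $x_1, x_2$ be positive integers with $x_1 x_2 > 1$, and let $M = \begin{pmatrix} 2x_1 & -1 \\ -1 & 2x_2 \end{pmatrix}$. Then there is no $2\times 2$ integer matrix $A$ with $A M A^T = M$, $|\det A| = 1$, and $\operatorname{trace}(A) = -1$. -/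
/-!
For `2 × 2` matrices `adj Aᵀ = tr A • 1 - Aᵀ`, so multiplying `A M Aᵀ = M` on the right by
`adj Aᵀ` turns it into the linear identity `det A • A M + M Aᵀ = tr A • M`.

If `det A = -1`, taking traces (with `tr (M Aᵀ) = tr (A M)` as `M` is symmetric) leaves
`tr A * tr M = 0`; but `tr A = -1`, and `tr M = 2 (x₁ + x₂) = 0` would force `x₁ x₂ = -x₁² ≤ 0`.

If `det A = 1`, the identity says that `S = (2A + 1) M` is skew-symmetric, so `det S = S₀₁²`,
while `det S = det (2A + 1) * det M = 3 det M`. Reading `S * adj M = det M • (2A + 1)` at the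
entry `(0, 0)` gives `det M ∣ S₀₁ M₁₀`, hence `det M ∣ 3 M₁₀² = 3`, which fails since
`det M = 4 x₁ x₂ - 1 > 3`.
-/

open Matrix

namespace Matrix

section CommRing

variable {R : Type*} [CommRing R]

theorem adjugate_fin_two_eq_trace_smul_sub (A : Matrix (Fin 2) (Fin 2) R) :
    adjugate A = A.trace • 1 - A := by
  ext i j
  fin_cases i <;> fin_cases j <;> simp [adjugate_fin_two, trace_fin_two]

theorem det_two_smul_add_one_fin_two (A : Matrix (Fin 2) (Fin 2) R) :
    (2 • A + 1).det = 4 * A.det + 2 * A.trace + 1 := by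
  rw [det_fin_two, det_fin_two, trace_fin_two]
  simp only [add_apply, smul_apply, one_apply_eq, one_apply_ne Fin.zero_ne_one,
    one_apply_ne Fin.zero_ne_one.symm]
  simp only [nsmul_eq_mul, Nat.cast_ofNat]
  ring

variable {A M : Matrix (Fin 2) (Fin 2) R}

theorem det_smul_mul_add_mul_transpose_fin_two (h : A * M * Aᵀ = M) :
    A.det • (A * M) + M * Aᵀ = A.trace • M := by
  rw [← eq_sub_iff_add_eq]
  calc A.det • (A * M) = A * M * Aᵀ * adjugate Aᵀ := by
        rw [Matrix.mul_assoc (A * M), mul_adjugate, det_transpose, Matrix.mul_smul, Matrix.mul_one]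
    _ = A.trace • M - M * Aᵀ := by
        rw [h, adjugate_fin_two_eq_trace_smul_sub, trace_transpose, Matrix.mul_sub,
          Matrix.mul_smul, Matrix.mul_one]

theorem det_add_one_mul_trace_mul_fin_two (hM : Mᵀ = M) (h : A * M * Aᵀ = M) :
    (A.det + 1) * (A * M).trace = A.trace * M.trace := by
  have htr := congrArg trace (det_smul_mul_add_mul_transpose_fin_two h)
  have hMA : (M * Aᵀ).trace = (A * M).trace := by
    rw [← trace_transpose, transpose_mul, transpose_transpose, hM]
  rw [trace_add, trace_smul, trace_smul, hMA, smul_eq_mul, smul_eq_mul] at htr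
  linear_combination htr

theorem apply_self_eq_zero_of_transpose_eq_neg {n α : Type*} [AddGroup α] [IsAddTorsionFree α]
    {S : Matrix n n α} (hS : Sᵀ = -S) (i : n) : S i i = 0 :=
  self_eq_neg.mp (congrFun (congrFun hS i) i)

theorem det_eq_sq_of_transpose_eq_neg_fin_two [IsAddTorsionFree R] {S : Matrix (Fin 2) (Fin 2) R}
    (hS : Sᵀ = -S) : S.det = S 0 1 ^ 2 := by
  have h10 : S 0 1 = -S 1 0 := congrFun (congrFun hS 1) 0
  rw [det_fin_two, apply_self_eq_zero_of_transpose_eq_neg hS, h10]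
  ring

end CommRing

theorem det_dvd_of_mul_mul_transpose_eq_fin_two {R : Type*} [CommRing R] [IsDomain R]
    [IsAddTorsionFree R] {A M : Matrix (Fin 2) (Fin 2) R}
    (hM : Mᵀ = M) (hM₀ : M.det ≠ 0) (h : A * M * Aᵀ = M) (hdet : A.det = 1)
    (htr : A.trace = -1) : M.det ∣ 3 * M 1 0 ^ 2 := by
  set B := 2 • A + 1
  set S := B * M
  have hMA : M * Aᵀ = -M - A * M := by
    have := det_smul_mul_add_mul_transpose_fin_two h
    rw [hdet, htr, one_smul, neg_one_smul] at this
    rw [← this]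
    abel
  have hskew : Sᵀ = -S := by
    rw [transpose_mul, hM, transpose_add, transpose_smul, transpose_one, Matrix.mul_add,
      Matrix.mul_smul, Matrix.mul_one, hMA]
    simp only [S, B, Matrix.add_mul, Matrix.smul_mul, Matrix.one_mul]
    abel
  have hdetS : S 0 1 ^ 2 = 3 * M.det := by
    rw [← det_eq_sq_of_transpose_eq_neg_fin_two hskew, det_mul, det_two_smul_add_one_fin_two,
      hdet, htr]
    ring
  have hentry : S 0 1 * -M 1 0 = M.det * B 0 0 := by
    have hSadj : S * adjugate M = M.det • B := by
      rw [Matrix.mul_assoc, mul_adjugate, Matrix.mul_smul, Matrix.mul_one]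
    simpa [mul_apply, Fin.sum_univ_two, adjugate_fin_two,
      apply_self_eq_zero_of_transpose_eq_neg hskew] using
      congrFun (congrFun hSadj 0) 0
  have hdvd : M.det * M.det ∣ M.det * (3 * M 1 0 ^ 2) := by
    refine ⟨B 0 0 ^ 2, ?_⟩
    linear_combination (-M 1 0 ^ 2) * hdetS + (S 0 1 * -M 1 0 + M.det * B 0 0) * hentry
  exact (mul_dvd_mul_iff_left hM₀).mp hdvd

end Matrix

theorem stmt_10_general (x₁ x₂ : ℤ) (hx : 1 < x₁ * x₂) :
    ¬ ∃ A : Matrix (Fin 2) (Fin 2) ℤ,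
      A * !![2 * x₁, -1; -1, 2 * x₂] * Aᵀ = !![2 * x₁, -1; -1, 2 * x₂] ∧
      |A.det| = 1 ∧ A.trace = -1 := by
  rintro ⟨A, h, hdet, htr⟩
  have hM : (!![2 * x₁, -1; -1, 2 * x₂])ᵀ = !![2 * x₁, -1; -1, 2 * x₂] := by
    simp [← Matrix.ext_iff, Fin.forall_fin_two]
  have hdetM : (!![2 * x₁, -1; -1, 2 * x₂]).det = 4 * (x₁ * x₂) - 1 := by
    rw [det_fin_two_of]
    ring
  rcases abs_eq zero_le_one |>.mp hdet with hdet | hdet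
  · have hdvd := det_dvd_of_mul_mul_transpose_eq_fin_two hM (by omega) h hdet htr
    have h3 : 4 * (x₁ * x₂) - 1 ∣ 3 := by simpa [hdetM] using hdvd
    have := Int.le_of_dvd three_pos h3
    omega
  · have htrace := det_add_one_mul_trace_mul_fin_two hM h
    rw [hdet, htr, trace_fin_two_of] at htrace
    have hsum : x₂ = -x₁ := by linarith
    subst hsum
    nlinarith [sq_nonneg x₁]

theorem stmt_10 (x₁ x₂ : ℤ) (hx₁ : 0 < x₁) (hx₂ : 0 < x₂) (hx : 1 < x₁ * x₂) :
    ¬ ∃ A : Matrix (Fin 2) (Fin 2) ℤ,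
      A * !![2 * x₁, -1; -1, 2 * x₂] * Aᵀ = !![2 * x₁, -1; -1, 2 * x₂] ∧
      |A.det| = 1 ∧ A.trace = -1 :=
  stmt_10_general x₁ x₂ hx
end

section
/- Let $x_1,x_2$ be positive integers and $M = \begin{pmatrix} 2x_1 & -1 \\ -1 & 2x_2 \end{pmatrix}$. If $A = \begin{pmatrix} a_1 & a_2 \\ a_3 & a_4 \end{pmatrix}$ is an integer matrix with $A M A^T = M$, then $(2x_1-1)a_1^2 + (a_1-a_2)^2 + (2x_2-1)a_2^2 = 2x_1$ and $(2x_1-1)a_3^2 + (a_3-a_4)^2 + (2x_2-1)a_4^2 = 2x_2$; in particular $a_1^2 \le 1$ and $a_4^2 \le 1$. -/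
open Matrix

/-! Each diagonal entry of `A M Aᵀ = M` says that a row `(u, v)` of `A` represents the diagonal
entry `2x` of `M` by the quadratic form `2x₁u² - 2uv + 2x₂v²
= (2x₁ - 1)u² + (u - v)² + (2x₂ - 1)v²`, a sum of nonnegative terms. Hence `(2x - 1)u² ≤ 2x`,
which for an integer with `u² ≥ 4` would force `6x ≤ 4`. -/

theorem Matrix.mul_fin_two_symm_mul_transpose_apply_self {R : Type*} [CommRing R]
    (A : Matrix (Fin 2) (Fin 2) R) (p r q : R) (i : Fin 2) :
    (A * !![p, r; r, q] * Aᵀ) i i = p * A i 0 ^ 2 + 2 * r * A i 0 * A i 1 + q * A i 1 ^ 2 := by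
  simp only [mul_apply, Fin.sum_univ_two, transpose_apply, of_apply, cons_val', cons_val_zero,
    cons_val_one, cons_val_fin_one, empty_val']
  ring

theorem Int.sq_le_one_of_two_mul_sub_one_mul_sq_le {x u : ℤ} (hx : 0 < x)
    (h : (2 * x - 1) * u ^ 2 ≤ 2 * x) : u ^ 2 ≤ 1 := by
  by_contra! hu
  have hu_abs : 2 ≤ |u| := one_lt_sq_iff_one_lt_abs u |>.mp hu
  have hu_sq : 4 ≤ u ^ 2 := by nlinarith [sq_abs u]
  nlinarith

theorem stmt_11 (x₁ x₂ : ℤ) (hx₁ : 0 < x₁) (hx₂ : 0 < x₂)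
    (A : Matrix (Fin 2) (Fin 2) ℤ)
    (hA : A * !![2 * x₁, -1; -1, 2 * x₂] * Aᵀ = !![2 * x₁, -1; -1, 2 * x₂]) :
    (2 * x₁ - 1) * (A 0 0) ^ 2 + (A 0 0 - A 0 1) ^ 2 + (2 * x₂ - 1) * (A 0 1) ^ 2 = 2 * x₁ ∧
    (2 * x₁ - 1) * (A 1 0) ^ 2 + (A 1 0 - A 1 1) ^ 2 + (2 * x₂ - 1) * (A 1 1) ^ 2 = 2 * x₂ ∧
    (A 0 0) ^ 2 ≤ 1 ∧ (A 1 1) ^ 2 ≤ 1 := by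
  have row_eq (i : Fin 2) :
      (2 * x₁ - 1) * A i 0 ^ 2 + (A i 0 - A i 1) ^ 2 + (2 * x₂ - 1) * A i 1 ^ 2 =
        !![2 * x₁, -1; -1, 2 * x₂] i i := by
    rw [← hA, mul_fin_two_symm_mul_transpose_apply_self]
    ring
  have row₀ : (2 * x₁ - 1) * A 0 0 ^ 2 + (A 0 0 - A 0 1) ^ 2 + (2 * x₂ - 1) * A 0 1 ^ 2
      = 2 * x₁ := row_eq 0
  have row₁ : (2 * x₁ - 1) * A 1 0 ^ 2 + (A 1 0 - A 1 1) ^ 2 + (2 * x₂ - 1) * A 1 1 ^ 2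
      = 2 * x₂ := row_eq 1
  have hx₁' : 0 ≤ 2 * x₁ - 1 := by omega
  have hx₂' : 0 ≤ 2 * x₂ - 1 := by omega
  refine ⟨row₀, row₁, Int.sq_le_one_of_two_mul_sub_one_mul_sq_le hx₁ ?_,
    Int.sq_le_one_of_two_mul_sub_one_mul_sq_le hx₂ ?_⟩
  · linarith [mul_nonneg hx₂' (sq_nonneg (A 0 1)), sq_nonneg (A 0 0 - A 0 1)]
  · linarith [mul_nonneg hx₁' (sq_nonneg (A 1 0)), sq_nonneg (A 1 0 - A 1 1)]
end
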